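/- arXiv:1204.1743 — 2 statements merged into one kernel-verified Lean document; each statement's English description precedes it below -/
import Mathlib

section
/- Let p > 3 be a prime and let a, b ∈ ℚ_p be nonzero with |b|_p < |a|_p = 1. Then the equation x³ + ax = b has a solution x ∈ ℤ_p^* if and only if (−a_0)^{(p−1)/2} ≡ 1 (mod p), where a_0 is the first digit of a. -/
/-!
Write `α ∈ 𝔽_p` for the reduction of `a`. Reducing `x (x² + a) = b` modulo `p` shows that a unit
root `x` satisfies `x² ≡ -α`, so `-α` is a square, which by Euler's criterion is the stated
congruence. Conversely, a square root `y` of `-α` is a root of the reduced cubic `X³ + αX` whose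
derivative there is `3y² + α = -2α ≠ 0` (as `p` is odd), so Hensel's lemma lifts it to a root
in `ℤ_p` reducing to `y ≠ 0`, i.e. to a unit root.
-/

/-- `x0` is the first digit of the nonzero `p`-adic number `x`: the unique integer in
`{1, …, p-1}` congruent modulo `p` to the unit part `x* = x·|x|_p = x·p^{-v_p(x)}`. -/
def isFirstDigit (p : ℕ) [Fact p.Prime] (x : ℚ_[p]) (x0 : ℤ) : Prop :=
  1 ≤ x0 ∧ x0 ≤ (p : ℤ) - 1 ∧ ‖x * (p : ℚ_[p]) ^ (-x.valuation) - (x0 : ℚ_[p])‖ < 1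

open Polynomial

section

variable {p : ℕ} [Fact p.Prime]

lemma Padic.valuation_eq_zero_of_norm_eq_one {x : ℚ_[p]} (hx : ‖x‖ = 1) : x.valuation = 0 := by
  have hx0 : x ≠ 0 := norm_ne_zero_iff.mp (by rw [hx]; exact one_ne_zero)
  have hp : (1 : ℝ) < p := by exact_mod_cast (Fact.out : p.Prime).one_lt
  rw [Padic.norm_eq_zpow_neg_valuation hx0, zpow_eq_one_iff_right₀ (by positivity) hp.ne'] at hx
  omega

lemma Padic.exists_norm_eq_one_iff {P : ℚ_[p] → Prop} :
    (∃ x : ℚ_[p], ‖x‖ = 1 ∧ P x) ↔ ∃ x : ℤ_[p], ‖x‖ = 1 ∧ P x :=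
  ⟨fun ⟨x, hx, hPx⟩ => ⟨⟨x, hx.le⟩, hx, hPx⟩, fun ⟨x, hx, hPx⟩ => ⟨x, hx, hPx⟩⟩

lemma ZMod.isSquare_intCast_iff_modEq (hp : p ≠ 2) {n : ℤ} (hn : (n : ZMod p) ≠ 0) :
    IsSquare (n : ZMod p) ↔ n ^ ((p - 1) / 2) ≡ 1 [ZMOD p] := by
  obtain ⟨k, rfl⟩ := (Fact.out : p.Prime).odd_of_ne_two hp
  rw [ZMod.euler_criterion _ hn, ← ZMod.intCast_eq_intCast_iff, Int.cast_pow, Int.cast_one,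
    show (2 * k + 1 - 1) / 2 = (2 * k + 1) / 2 by omega]

namespace PadicInt

lemma toZMod_eq_zero_iff {x : ℤ_[p]} : toZMod x = 0 ↔ ‖x‖ < 1 := by
  rw [← RingHom.mem_ker, ker_toZMod, IsLocalRing.mem_maximalIdeal, mem_nonunits]

lemma toZMod_ne_zero_iff {x : ℤ_[p]} : toZMod x ≠ 0 ↔ ‖x‖ = 1 := by
  rw [Ne, toZMod_eq_zero_iff, not_lt]
  exact ⟨(norm_le_one x).antisymm, ge_of_eq⟩

lemma toZMod_eq_toZMod_iff {x y : ℤ_[p]} : toZMod x = toZMod y ↔ ‖x - y‖ < 1 := by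
  rw [← sub_eq_zero, ← map_sub, toZMod_eq_zero_iff]

lemma toZMod_eq_of_isFirstDigit {a : ℤ_[p]} (ha : ‖a‖ = 1) {a0 : ℤ} (h : isFirstDigit p a a0) :
    toZMod a = a0 := by
  obtain ⟨-, -, h⟩ := h
  rw [Padic.valuation_eq_zero_of_norm_eq_one (by rwa [padic_norm_e_of_padicInt]), neg_zero,
    zpow_zero, mul_one] at h
  rw [← map_intCast toZMod, toZMod_eq_toZMod_iff, ← padic_norm_e_of_padicInt]
  push_cast
  exact h

theorem exists_isRoot_toZMod_eq {f : ℤ_[p][X]} {y : ZMod p} (hroot : (f.map toZMod).IsRoot y)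
    (hsimple : (f.map toZMod).derivative.eval y ≠ 0) :
    ∃ z : ℤ_[p], f.IsRoot z ∧ toZMod z = y := by
  obtain ⟨y, rfl⟩ := ZMod.ringHom_surjective toZMod y
  rw [derivative_map, eval_map, eval₂_hom, toZMod_ne_zero_iff] at hsimple
  rw [IsRoot, eval_map, eval₂_hom, toZMod_eq_zero_iff] at hroot
  obtain ⟨z, hz, hzy, -⟩ := hensels_lemma (F := f) (a := y)
    (by rwa [coe_aeval_eq_eval, hsimple, one_pow])
  rw [coe_aeval_eq_eval] at hz hzy
  exact ⟨z, hz, toZMod_eq_toZMod_iff.mpr (hsimple ▸ hzy)⟩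

theorem exists_cubic_root_norm_eq_one_iff (hp : p ≠ 2) {A B : ℤ_[p]} (hA : ‖A‖ = 1)
    (hB : ‖B‖ < 1) :
    (∃ x : ℤ_[p], ‖x‖ = 1 ∧ x ^ 3 + A * x = B) ↔ IsSquare (-toZMod A) := by
  rw [← toZMod_ne_zero_iff] at hA
  rw [← toZMod_eq_zero_iff] at hB
  constructor
  · rintro ⟨x, hx, hxAB⟩
    rw [← toZMod_ne_zero_iff] at hx
    have hfactor : toZMod x * (toZMod x ^ 2 + toZMod A) = 0 := by
      rw [← hB, ← hxAB, map_add, map_mul, map_pow]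
      ring
    refine ⟨toZMod x, ?_⟩
    linear_combination -(mul_eq_zero.mp hfactor).resolve_left hx
  · rintro ⟨y, hy⟩
    have hy0 : y ≠ 0 := by
      rintro rfl
      exact hA (neg_eq_zero.mp (hy.trans (mul_zero 0)))
    have htwo : (2 : ZMod p) ≠ 0 := Ring.two_ne_zero (by rwa [ZMod.ringChar_zmod_n])
    have hmap : (X ^ 3 + C A * X - C B).map toZMod = X ^ 3 + C (toZMod A) * X := by simp [hB]
    have hroot : (X ^ 3 + C (toZMod A) * X).IsRoot y := by
      simp only [IsRoot, eval_add, eval_pow, eval_mul, eval_C, eval_X]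
      linear_combination (-y) * hy
    have hsimple : (X ^ 3 + C (toZMod A) * X).derivative.eval y ≠ 0 := by
      simp only [derivative_add, derivative_X_pow, derivative_C_mul_X, eval_add, eval_mul,
        eval_C, eval_pow, eval_X, Nat.cast_ofNat, Nat.reduceSub]
      rw [show (3 : ZMod p) * y ^ 2 + toZMod A = -2 * toZMod A by linear_combination (-3) * hy]
      exact mul_ne_zero (neg_ne_zero.mpr htwo) hA
    obtain ⟨z, hz, hzy⟩ := exists_isRoot_toZMod_eq (hmap ▸ hroot) (hmap ▸ hsimple)
    refine ⟨z, toZMod_ne_zero_iff.mp (hzy ▸ hy0), ?_⟩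
    simpa [sub_eq_zero] using hz

end PadicInt

end

open PadicInt in
theorem cubic_unit_solvable_iff_of_gt_general (p : ℕ) [Fact p.Prime] (hp : 3 < p)
    (a b : ℚ_[p])
    (hab : ‖b‖ < ‖a‖) (ha1 : ‖a‖ = 1)
    (a0 : ℤ) (ha0 : isFirstDigit p a a0) :
    (∃ x : ℚ_[p], ‖x‖ = 1 ∧ x ^ 3 + a * x = b) ↔
      Int.ModEq (p : ℤ) ((-a0) ^ ((p - 1) / 2)) 1 := by
  have hp2 : p ≠ 2 := by omega
  obtain ⟨A, rfl⟩ : ∃ A : ℤ_[p], (A : ℚ_[p]) = a := ⟨⟨a, ha1.le⟩, rfl⟩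
  obtain ⟨B, rfl⟩ : ∃ B : ℤ_[p], (B : ℚ_[p]) = b := ⟨⟨b, (hab.trans_eq ha1).le⟩, rfl⟩
  simp only [padic_norm_e_of_padicInt] at ha1 hab
  have hA0 : toZMod A = a0 := toZMod_eq_of_isFirstDigit ha1 ha0
  have hna0 : ((-a0 : ℤ) : ZMod p) ≠ 0 := by
    rw [Int.cast_neg, ← hA0]
    exact neg_ne_zero.mpr (toZMod_ne_zero_iff.mpr ha1)
  calc (∃ x : ℚ_[p], ‖x‖ = 1 ∧ x ^ 3 + A * x = B)
      ↔ ∃ x : ℤ_[p], ‖x‖ = 1 ∧ x ^ 3 + A * x = B := by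
        rw [Padic.exists_norm_eq_one_iff]
        exact exists_congr fun x => and_congr_right fun _ => by norm_cast; exact Subtype.coe_inj
    _ ↔ IsSquare (-toZMod A) := exists_cubic_root_norm_eq_one_iff hp2 ha1 (hab.trans_eq ha1)
    _ ↔ _ := by
        rw [hA0, ← Int.cast_neg]
        exact ZMod.isSquare_intCast_iff_modEq hp2 hna0

theorem cubic_unit_solvable_iff_of_gt (p : ℕ) [Fact p.Prime] (hp : 3 < p)
    (a b : ℚ_[p]) (ha : a ≠ 0) (hb : b ≠ 0)
    (hab : ‖b‖ < ‖a‖) (ha1 : ‖a‖ = 1)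
    (a0 : ℤ) (ha0 : isFirstDigit p a a0) :
    (∃ x : ℚ_[p], ‖x‖ = 1 ∧ x ^ 3 + a * x = b) ↔
      Int.ModEq (p : ℤ) ((-a0) ^ ((p - 1) / 2)) 1 :=
  cubic_unit_solvable_iff_of_gt_general p hp a b hab ha1 a0 ha0
end

section
/- Let p > 3 be a prime and let a, b ∈ ℚ_p be nonzero with |a|_p³ = |b|_p² ≤ 1. Then the equation x³ + ax = b has a solution x ∈ ℤ_p if and only if D_0·u_{p−2}² ≢ 9·a_0² (mod p), where a_0, b_0 are the first digits of a and b, D_0 = −4a_0³ − 27b_0², and (u_n) is the integer sequence defined by u_1 = 0, u_2 = −a_0, u_3 = b_0, and u_{n+3} = b_0·u_n − a_0·u_{n+1}. -/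
/-- The sequence `u_1 = 0`, `u_2 = -a0`, `u_3 = b0`, `u_{n+3} = b0·u_n - a0·u_{n+1}`. -/
def useq (a0 b0 : ℤ) : ℕ → ℤ
  | 0 => 0
  | 1 => 0
  | 2 => -a0
  | 3 => b0
  | n + 4 => b0 * useq a0 b0 (n + 1) - a0 * useq a0 b0 (n + 2)

/-- `α, β, γ` are the roots, with multiplicity, of `X³ + aX - b`. -/
structure IsRootTriple {R : Type*} [CommRing R] (a b α β γ : R) : Prop where
  sum_eq_zero : α + β + γ = 0
  pair_sum_eq : α * β + α * γ + β * γ = a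
  prod_eq : α * β * γ = b

namespace IsRootTriple

section CommRing

variable {R : Type*} [CommRing R] {a b α β γ : R}

theorem swap (h : IsRootTriple a b α β γ) : IsRootTriple a b α γ β :=
  ⟨by linear_combination h.sum_eq_zero, by linear_combination h.pair_sum_eq,
    by linear_combination h.prod_eq⟩

theorem rotate (h : IsRootTriple a b α β γ) : IsRootTriple a b β γ α :=
  ⟨by linear_combination h.sum_eq_zero, by linear_combination h.pair_sum_eq,
    by linear_combination h.prod_eq⟩

theorem map {S : Type*} [CommRing S] (h : IsRootTriple a b α β γ) (f : R →+* S) :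
    IsRootTriple (f a) (f b) (f α) (f β) (f γ) :=
  ⟨by rw [← map_add, ← map_add, h.sum_eq_zero, map_zero],
    by simp only [← map_mul, ← map_add, h.pair_sum_eq], by simp only [← map_mul, h.prod_eq]⟩

theorem eq_neg_add (h : IsRootTriple a b α β γ) : γ = -(α + β) := by
  linear_combination h.sum_eq_zero

theorem cubic_eq (h : IsRootTriple a b α β γ) (x : R) :
    x ^ 3 + a * x - b = (x - α) * (x - β) * (x - γ) := by
  rw [← h.pair_sum_eq, ← h.prod_eq, h.eq_neg_add]; ring

theorem isRoot (h : IsRootTriple a b α β γ) : α ^ 3 + a * α = b := by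
  linear_combination h.cubic_eq α

theorem discr_eq (h : IsRootTriple a b α β γ) :
    -4 * a ^ 3 - 27 * b ^ 2 = ((α - β) * (α - γ) * (β - γ)) ^ 2 := by
  rw [← h.pair_sum_eq, ← h.prod_eq, h.eq_neg_add]; ring

/-- For `n ≥ 1`, `useq a0 b0 n` is the complete homogeneous symmetric polynomial `hₙ` of the
roots (but `useq a0 b0 0 = 0 ≠ h₀`). -/
theorem useq_mul {a0 b0 : ℤ} (h : IsRootTriple (a0 : R) b0 α β γ) (n : ℕ) :
    useq a0 b0 (n + 1) * ((α - β) * (α - γ) * (β - γ)) =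
      α ^ (n + 3) * (β - γ) - β ^ (n + 3) * (α - γ) + γ ^ (n + 3) * (α - β) := by
  have hα := h.isRoot
  have hβ := h.rotate.isRoot
  have hγ := h.rotate.rotate.isRoot
  induction n using Nat.strong_induction_on with
  | _ n ih =>
    match n with
    | 0 => simp only [useq]; rw [h.eq_neg_add]; push_cast; ring
    | 1 => simp only [useq]; push_cast; rw [← h.pair_sum_eq, h.eq_neg_add]; ring
    | 2 => simp only [useq]; rw [← h.prod_eq, h.eq_neg_add]; ring
    | m + 3 =>
      rw [useq]; push_cast
      linear_combination (b0 : R) * ih m (by omega) - (a0 : R) * ih (m + 1) (by omega)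
        - α ^ (m + 3) * (β - γ) * hα + β ^ (m + 3) * (α - γ) * hβ - γ ^ (m + 3) * (α - β) * hγ

end CommRing

section Field

variable {K : Type*} [Field K] {a b α β γ : K}

theorem eq_or_eq_or_eq (h : IsRootTriple a b α β γ) {x : K} (hx : x ^ 3 + a * x = b) :
    x = α ∨ x = β ∨ x = γ := by
  have hx0 : (x - α) * (x - β) * (x - γ) = 0 := by rw [← h.cubic_eq]; linear_combination hx
  simp only [mul_eq_zero, sub_eq_zero] at hx0
  tauto

theorem exists_of_isAlgClosed [IsAlgClosed K] (a b : K) :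
    ∃ α β γ : K, IsRootTriple a b α β γ := by
  open Polynomial in
  obtain ⟨α, hα⟩ := IsAlgClosed.exists_root (X ^ 3 + C a * X - C b) (by
    rw [show (X ^ 3 + C a * X - C b : K[X]).degree = 3 by compute_degree!]; decide)
  obtain ⟨β, hβ⟩ := IsAlgClosed.exists_root (X ^ 2 + C α * X + C (α ^ 2 + a)) (by
    rw [show (X ^ 2 + C α * X + C (α ^ 2 + a) : K[X]).degree = 2 by compute_degree!]; decide)
  simp only [IsRoot, eval_sub, eval_add, eval_mul, eval_pow, eval_C, eval_X] at hα hβ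
  exact ⟨α, β, -(α + β), by ring, by linear_combination -hβ, by linear_combination hα - α * hβ⟩

end Field

end IsRootTriple

section TwistedDet

variable {K : Type*} [Field K] (σ : K →+* K)

/-- The determinant of the rows `(σ α, σ β, σ γ)`, `(α, β, γ)`, `(1, 1, 1)`. -/
def twistedDet (α β γ : K) : K := σ α * (β - γ) - σ β * (α - γ) + σ γ * (α - β)

variable {σ} {a b α β γ : K}

theorem twistedDet_swap : twistedDet σ α γ β = -twistedDet σ α β γ := by
  unfold twistedDet; ring

theorem twistedDet_rotate : twistedDet σ β γ α = twistedDet σ α β γ := by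
  unfold twistedDet; ring

theorem twistedDet_of_eq (hαβ : α = β) : twistedDet σ α β γ = 0 := by
  unfold twistedDet; rw [hαβ]; ring

theorem IsRootTriple.twistedDet_sq_ne_of_map_eq_self (h : IsRootTriple a b α β γ) (hσa : σ a = a)
    (hσb : σ b = b) (ha : a ≠ 0) (hb : b ≠ 0) (h3 : (3 : K) ≠ 0) (hα : σ α = α) :
    twistedDet σ α β γ ^ 2 ≠ 9 * a ^ 2 := by
  have h9 : (9 : K) ≠ 0 := by simpa only [show (3 : K) * 3 = 9 by norm_num] using mul_ne_zero h3 h3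
  intro hV
  have hV0 : twistedDet σ α β γ ≠ 0 := fun h0 =>
    mul_ne_zero h9 (pow_ne_zero 2 ha) (by rw [← hV, h0]; ring)
  have hσ := h.map σ
  rw [hσa, hσb] at hσ
  rcases h.eq_or_eq_or_eq hσ.rotate.isRoot with hβ | hβ | hβ
  · exact hV0 (twistedDet_of_eq (σ.injective (hα.trans hβ.symm)))
  · have hγ : σ γ = γ := by linear_combination hσ.sum_eq_zero - h.sum_eq_zero - hα - hβ
    exact hV0 (by unfold twistedDet; rw [hα, hβ, hγ]; ring)
  · have hγ : σ γ = β := by linear_combination hσ.sum_eq_zero - h.sum_eq_zero - hα - hβ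
    have hαβ : α ≠ β := fun e => hV0 (twistedDet_of_eq e)
    have hαγ : α ≠ γ := fun e =>
      hV0 (by rw [← neg_eq_zero, ← twistedDet_swap, twistedDet_of_eq e])
    have hβ0 : β ≠ 0 := by rintro rfl; exact hb (by rw [← h.prod_eq]; ring)
    have hγ0 : γ ≠ 0 := by rintro rfl; exact hb (by rw [← h.prod_eq]; ring)
    -- for the transposition `(β γ)`, `twistedDet² - 9a² = -9 β γ (α - β) (α - γ)`
    unfold twistedDet at hV
    rw [hα, hβ, hγ, ← h.pair_sum_eq] at hV
    refine mul_ne_zero (mul_ne_zero (mul_ne_zero (mul_ne_zero h9 hβ0) hγ0) (sub_ne_zero.2 hαβ))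
      (sub_ne_zero.2 hαγ) ?_
    rw [h.eq_neg_add] at hV ⊢
    linear_combination -hV

theorem IsRootTriple.twistedDet_eq_of_map_eq (h : IsRootTriple a b α β γ) (hσa : σ a = a)
    (hσb : σ b = b) (hfix : ∀ t, t ^ 3 + a * t = b → σ t ≠ t) (hα : σ α = β) :
    twistedDet σ α β γ = -3 * a := by
  have hσ := h.map σ
  rw [hσa, hσb] at hσ
  have hβ : σ β = γ := by
    rcases h.eq_or_eq_or_eq hσ.rotate.isRoot with e | e | e
    · exact absurd (by linear_combination hσ.sum_eq_zero - h.sum_eq_zero - hα - e)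
        (hfix γ h.rotate.rotate.isRoot)
    · exact absurd e (hfix β h.rotate.isRoot)
    · exact e
  have hγ : σ γ = α := by linear_combination hσ.sum_eq_zero - h.sum_eq_zero - hα - hβ
  unfold twistedDet
  rw [hα, hβ, hγ, ← h.pair_sum_eq, h.eq_neg_add]
  ring

theorem IsRootTriple.twistedDet_sq_eq_of_forall_map_ne (h : IsRootTriple a b α β γ)
    (hσa : σ a = a) (hσb : σ b = b) (hfix : ∀ t, t ^ 3 + a * t = b → σ t ≠ t) :
    twistedDet σ α β γ ^ 2 = 9 * a ^ 2 := by
  have hσ := h.map σ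
  rw [hσa, hσb] at hσ
  rcases h.eq_or_eq_or_eq hσ.isRoot with e | e | e
  · exact absurd e (hfix α h.isRoot)
  · rw [h.twistedDet_eq_of_map_eq hσa hσb hfix e]; ring
  · rw [← neg_sq, ← twistedDet_swap, h.swap.twistedDet_eq_of_map_eq hσa hσb hfix e]; ring

theorem IsRootTriple.exists_map_eq_self_iff (h : IsRootTriple a b α β γ) (hσa : σ a = a)
    (hσb : σ b = b) (ha : a ≠ 0) (hb : b ≠ 0) (h3 : (3 : K) ≠ 0) :
    (∃ t, σ t = t ∧ t ^ 3 + a * t = b) ↔ twistedDet σ α β γ ^ 2 ≠ 9 * a ^ 2 := by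
  constructor
  · rintro ⟨t, ht, hroot⟩
    rcases h.eq_or_eq_or_eq hroot with rfl | rfl | rfl
    · exact h.twistedDet_sq_ne_of_map_eq_self hσa hσb ha hb h3 ht
    · rw [← twistedDet_rotate]
      exact h.rotate.twistedDet_sq_ne_of_map_eq_self hσa hσb ha hb h3 ht
    · rw [← twistedDet_rotate, ← twistedDet_rotate]
      exact h.rotate.rotate.twistedDet_sq_ne_of_map_eq_self hσa hσb ha hb h3 ht
  · intro hV
    by_contra! hfix
    exact hV (h.twistedDet_sq_eq_of_forall_map_ne hσa hσb fun t ht ht' => hfix t ht' ht)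

end TwistedDet

open Polynomial in
theorem FiniteField.mem_range_algebraMap_of_pow_card_eq_self {F L : Type*} [Field F] [Fintype F]
    [Field L] [Algebra F L] {t : L} (ht : t ^ Fintype.card F = t) :
    t ∈ Set.range (algebraMap F L) := by
  classical
  have hprod : ((Finset.univ.val : Multiset F).map fun c => X - C c).prod =
      (X ^ Fintype.card F - X : F[X]) := by
    rw [← FiniteField.roots_X_pow_card_sub_X]
    refine prod_multiset_X_sub_C_of_monic_of_roots_card_eq ?_ ?_
    · exact monic_X_pow_sub (by simpa using Fintype.one_lt_card)
    · rw [FiniteField.roots_X_pow_card_sub_X,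
        FiniteField.X_pow_card_sub_X_natDegree_eq _ Fintype.one_lt_card]
      rfl
  have h0 := congrArg (aeval t) hprod
  rw [map_multiset_prod, Multiset.map_map] at h0
  simp only [Function.comp_def, map_sub, aeval_X, aeval_C, map_pow, ht, sub_self] at h0
  obtain ⟨c, -, hc⟩ := Multiset.mem_map.1 (Multiset.prod_eq_zero_iff.1 h0)
  exact ⟨c, (sub_eq_zero.1 hc).symm⟩

theorem ZMod.ofNat_three_ne_zero {p : ℕ} [Fact p.Prime] (hp : p ≠ 3) : (3 : ZMod p) ≠ 0 :=
  fun h3 => hp ((Nat.prime_dvd_prime_iff_eq Fact.out Nat.prime_three).1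
    ((ZMod.natCast_eq_zero_iff 3 p).1 (by exact_mod_cast h3)))

theorem ZMod.exists_cube_add_mul_eq_iff {p : ℕ} [Fact p.Prime] (hp : 3 < p) {a0 b0 : ℤ}
    (ha : (a0 : ZMod p) ≠ 0) (hb : (b0 : ZMod p) ≠ 0) :
    (∃ r : ZMod p, r ^ 3 + a0 * r = b0) ↔
      (((-4 * a0 ^ 3 - 27 * b0 ^ 2) * useq a0 b0 (p - 2) ^ 2 : ℤ) : ZMod p) ≠
        ((9 * a0 ^ 2 : ℤ) : ZMod p) := by
  let ι := algebraMap (ZMod p) (AlgebraicClosure (ZMod p))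
  have hι : ∀ n : ℤ, ι n = n := map_intCast ι
  obtain ⟨α, β, γ, h⟩ := IsRootTriple.exists_of_isAlgClosed (a0 : AlgebraicClosure (ZMod p)) b0
  have hfixed : (∃ r : ZMod p, r ^ 3 + a0 * r = b0) ↔
      ∃ t : AlgebraicClosure (ZMod p), frobenius _ p t = t ∧ t ^ 3 + a0 * t = b0 := by
    simp only [frobenius_def]
    constructor
    · rintro ⟨r, hr⟩
      refine ⟨ι r, by rw [← map_pow, ZMod.pow_card], ?_⟩
      simpa [ι] using congrArg ι hr
    · rintro ⟨t, ht, hroot⟩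
      obtain ⟨r, rfl⟩ := FiniteField.mem_range_algebraMap_of_pow_card_eq_self
        (F := ZMod p) (by rwa [ZMod.card])
      exact ⟨r, ι.injective (by simpa [ι] using hroot)⟩
  have hdet : twistedDet (frobenius _ p) α β γ =
      useq a0 b0 (p - 2) * ((α - β) * (α - γ) * (β - γ)) := by
    have := h.useq_mul (p - 3)
    rw [show p - 3 + 1 = p - 2 by omega, show p - 3 + 3 = p by omega] at this
    rw [this]
    simp [twistedDet, frobenius_def]
  have h3 : (3 : AlgebraicClosure (ZMod p)) ≠ 0 := by
    rw [← map_ofNat ι 3]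
    exact (map_ne_zero ι).2 (ZMod.ofNat_three_ne_zero hp.ne')
  rw [hfixed, h.exists_map_eq_self_iff (map_intCast _ a0) (map_intCast _ b0)
    (by rw [← hι]; exact (map_ne_zero ι).2 ha) (by rw [← hι]; exact (map_ne_zero ι).2 hb) h3,
    ← ι.injective.ne_iff, hι, hι, hdet]
  push_cast
  rw [h.discr_eq, mul_pow, mul_comm]

theorem norm_le_one_of_cube_add_mul_eq {K : Type*} [NormedField K] [IsUltrametricDist K]
    {A B y : K} (hA : ‖A‖ ≤ 1) (hB : ‖B‖ ≤ 1) (hy : y ^ 3 + A * y = B) : ‖y‖ ≤ 1 := by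
  by_contra! hy1
  have : ‖y‖ ^ 3 ≤ ‖y‖ := calc
    ‖y‖ ^ 3 = ‖B + -(A * y)‖ := by rw [← hy, add_neg_cancel_right, norm_pow]
    _ ≤ max ‖B‖ ‖-(A * y)‖ := IsUltrametricDist.norm_add_le_max _ _
    _ ≤ ‖y‖ := max_le (hB.trans hy1.le)
      (by rw [norm_neg, norm_mul]; exact mul_le_of_le_one_left (norm_nonneg y) hA)
  nlinarith [mul_pos (mul_pos (by linarith : (0 : ℝ) < ‖y‖) (sub_pos.2 hy1))
    (by linarith : (0 : ℝ) < ‖y‖ + 1)]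

theorem exists_cube_add_mul_eq_and_ne_zero {K : Type*} [Field K] {A B : K} (hA : A ≠ 0)
    (h3 : (3 : K) ≠ 0) {r : K} (hr : r ^ 3 + A * r = B) :
    ∃ s : K, s ^ 3 + A * s = B ∧ 3 * s ^ 2 + A ≠ 0 := by
  by_cases hd : 3 * r ^ 2 + A = 0
  · refine ⟨-2 * r, by linear_combination hr - 3 * r * hd, fun h9 => ?_⟩
    have hr0 : r ≠ 0 := by rintro rfl; exact hA (by linear_combination hd)
    exact mul_ne_zero (mul_ne_zero h3 h3) (pow_ne_zero 2 hr0) (by linear_combination h9 - hd)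
  · exact ⟨r, hr, hd⟩

section Padic

variable {p : ℕ} [Fact p.Prime]

theorem PadicInt.toZMod_eq_zero_iff_s6 (x : ℤ_[p]) : toZMod x = 0 ↔ ‖x‖ < 1 := by
  rw [← RingHom.mem_ker, ker_toZMod, IsLocalRing.mem_maximalIdeal, mem_nonunits]

open Polynomial in
theorem PadicInt.exists_cube_add_mul_eq_of_toZMod {A B z : ℤ_[p]}
    (hz : toZMod (z ^ 3 + A * z) = toZMod B) (hd : toZMod (3 * z ^ 2 + A) ≠ 0) :
    ∃ y : ℤ_[p], y ^ 3 + A * y = B := by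
  have hF : ∀ y, aeval y (X ^ 3 + C A * X - C B) = y ^ 3 + A * y - B := by simp
  have hF' : aeval z (derivative (X ^ 3 + C A * X - C B)) = 3 * z ^ 2 + A := by
    norm_num [derivative_X_pow]
  have hd1 : ‖3 * z ^ 2 + A‖ = 1 :=
    (norm_le_one _).antisymm (not_lt.1 fun h => hd ((toZMod_eq_zero_iff_s6 _).2 h))
  obtain ⟨y, hy, -⟩ := hensels_lemma (F := X ^ 3 + C A * X - C B) (a := z) (by
    rw [hF, hF', hd1, one_pow, ← toZMod_eq_zero_iff_s6, map_sub, hz, sub_self])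
  exact ⟨y, by rw [hF] at hy; linear_combination hy⟩

theorem PadicInt.exists_cube_add_mul_eq_iff (hp : p ≠ 3) {A B : ℤ_[p]} (hA : toZMod A ≠ 0) :
    (∃ z : ℤ_[p], z ^ 3 + A * z = B) ↔ ∃ r : ZMod p, r ^ 3 + toZMod A * r = toZMod B := by
  refine ⟨fun ⟨z, hz⟩ => ⟨toZMod z, by rw [← hz]; simp⟩, fun ⟨r, hr⟩ => ?_⟩
  obtain ⟨s, hs, hd⟩ := exists_cube_add_mul_eq_and_ne_zero hA (ZMod.ofNat_three_ne_zero hp) hr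
  obtain ⟨z, rfl⟩ := ZMod.ringHom_surjective toZMod s
  exact exists_cube_add_mul_eq_of_toZMod (by simpa using hs)
    (by rwa [map_add, map_mul, map_pow, map_ofNat])

theorem Padic.exists_valuation_eq_of_norm_pow_eq {a b : ℚ_[p]} (ha : a ≠ 0) (hb : b ≠ 0)
    (hab : ‖a‖ ^ 3 = ‖b‖ ^ 2) (hb1 : ‖b‖ ≤ 1) :
    ∃ k : ℕ, a.valuation = 2 * k ∧ b.valuation = 3 * k := by
  have hp : (1 : ℝ) < p := mod_cast (Fact.out : p.Prime).one_lt
  rw [norm_eq_zpow_neg_valuation ha, norm_eq_zpow_neg_valuation hb, ← zpow_natCast,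
    ← zpow_natCast, ← zpow_mul, ← zpow_mul, zpow_right_inj₀ (by positivity) hp.ne'] at hab
  have hb0 := (norm_le_one_iff_val_nonneg b).1 hb1
  exact ⟨(b.valuation - a.valuation).toNat, by omega, by omega⟩

theorem isFirstDigit.intCast_ne_zero {x : ℚ_[p]} {x0 : ℤ} (h : isFirstDigit p x x0) :
    (x0 : ZMod p) ≠ 0 := by
  rw [Ne, ZMod.intCast_zmod_eq_zero_iff_dvd]
  intro hdvd
  have := Int.le_of_dvd (by linarith [h.1]) hdvd
  linarith [h.2.1]

theorem isFirstDigit.exists_toZMod_eq {x : ℚ_[p]} {x0 : ℤ} (h : isFirstDigit p x x0)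
    (hx : x ≠ 0) : ∃ u : ℤ_[p], PadicInt.toZMod u = x0 ∧ x = u * (p : ℚ_[p]) ^ x.valuation := by
  have hp : (p : ℚ_[p]) ≠ 0 := by exact_mod_cast (Fact.out : p.Prime).ne_zero
  have hu : ‖x * (p : ℚ_[p]) ^ (-x.valuation)‖ ≤ 1 := by
    rw [norm_mul, Padic.norm_p_zpow, Padic.norm_eq_zpow_neg_valuation hx, neg_neg,
      ← zpow_add₀ (by exact_mod_cast (Fact.out : p.Prime).ne_zero), neg_add_cancel, zpow_zero]
  obtain ⟨u, hu⟩ : ∃ u : ℤ_[p], (u : ℚ_[p]) = x * (p : ℚ_[p]) ^ (-x.valuation) :=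
    ⟨⟨_, hu⟩, rfl⟩
  refine ⟨u, ?_, ?_⟩
  · rw [← sub_eq_zero, ← map_intCast PadicInt.toZMod, ← map_sub, PadicInt.toZMod_eq_zero_iff_s6,
      PadicInt.norm_def, PadicInt.coe_sub, hu, PadicInt.coe_intCast]
    exact h.2.2
  · rw [hu, mul_assoc, ← zpow_add₀ hp, neg_add_cancel, zpow_zero, mul_one]

theorem Padic.exists_norm_le_one_cube_add_mul_eq_iff {A B : ℤ_[p]} {g : ℚ_[p]} (hg0 : g ≠ 0)
    (hg : ‖g‖ ≤ 1) :
    (∃ x : ℚ_[p], ‖x‖ ≤ 1 ∧ x ^ 3 + A * g ^ 2 * x = B * g ^ 3) ↔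
      ∃ z : ℤ_[p], z ^ 3 + A * z = B := by
  constructor
  · rintro ⟨x, -, hx⟩
    have hy : (x / g) ^ 3 + A * (x / g) = B := by
      field_simp
      linear_combination hx
    obtain ⟨z, hz⟩ : ∃ z : ℤ_[p], (z : ℚ_[p]) = x / g :=
      ⟨⟨_, norm_le_one_of_cube_add_mul_eq A.2 B.2 hy⟩, rfl⟩
    exact ⟨z, PadicInt.ext (by push_cast; rw [hz, hy])⟩
  · rintro ⟨z, hz⟩
    refine ⟨z * g, by rw [norm_mul]; exact mul_le_one₀ z.2 (norm_nonneg _) hg, ?_⟩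
    have hz' := congrArg ((↑) : ℤ_[p] → ℚ_[p]) hz
    push_cast at hz'
    linear_combination g ^ 3 * hz'

end Padic

theorem cubic_int_solvable_iff_of_eq (p : ℕ) [Fact p.Prime] (hp : 3 < p)
    (a b : ℚ_[p]) (ha : a ≠ 0) (hb : b ≠ 0)
    (hab : ‖a‖ ^ 3 = ‖b‖ ^ 2) (hb1 : ‖b‖ ^ 2 ≤ 1)
    (a0 b0 : ℤ) (ha0 : isFirstDigit p a a0) (hb0 : isFirstDigit p b b0) :
    (∃ x : ℚ_[p], ‖x‖ ≤ 1 ∧ x ^ 3 + a * x = b) ↔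
      ¬ Int.ModEq (p : ℤ)
        ((-4 * a0 ^ 3 - 27 * b0 ^ 2) * useq a0 b0 (p - 2) ^ 2) (9 * a0 ^ 2) := by
  obtain ⟨k, hak, hbk⟩ := Padic.exists_valuation_eq_of_norm_pow_eq ha hb hab
    ((sq_le_one_iff₀ (norm_nonneg b)).1 hb1)
  obtain ⟨A, hA, haA⟩ := ha0.exists_toZMod_eq ha
  obtain ⟨B, hB, hbB⟩ := hb0.exists_toZMod_eq hb
  rw [hak, ← Nat.cast_ofNat, ← Nat.cast_mul, zpow_natCast, pow_mul'] at haA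
  rw [hbk, ← Nat.cast_ofNat, ← Nat.cast_mul, zpow_natCast, pow_mul'] at hbB
  have hg0 : (p : ℚ_[p]) ^ k ≠ 0 :=
    pow_ne_zero k (by exact_mod_cast (Fact.out : p.Prime).ne_zero)
  have hg : ‖(p : ℚ_[p]) ^ k‖ ≤ 1 := by
    rw [norm_pow]
    exact pow_le_one₀ (norm_nonneg _) Padic.norm_p_lt_one.le
  rw [haA, hbB, Padic.exists_norm_le_one_cube_add_mul_eq_iff hg0 hg,
    PadicInt.exists_cube_add_mul_eq_iff hp.ne' (hA ▸ ha0.intCast_ne_zero), hA, hB,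
    ZMod.exists_cube_add_mul_eq_iff hp ha0.intCast_ne_zero hb0.intCast_ne_zero, Ne,
    ZMod.intCast_eq_intCast_iff]
end
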